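/- Extension of stable functions exists: given effective sets X, Y and a stable function f : X → El(Y), the map g ∈ |El(X)| → |El(Y)| defined by g(u)(y) := ∃x ∈ |X|, u(x) ∧ f(x)(y) is a stable function from El(X) to El(Y) and satisfies ⊨ ∀x ∈ |X|, |x =_X x| ⇒ |g(el_X(x)) =_{El(Y)} f(x)|. -/

import Mathlib

set_option maxHeartbeats 1000000


open Nat.Partrec (Code)

/-- `φ_e(n)` : evaluation of the `e`-th partial recursive function. -/
def Phi (e n : ℕ) : Part ℕ := (Denumerable.ofNat Code e).eval n

/-- Realisability implication. -/
def rImp (F G : Set ℕ) : Set ℕ := {e | ∀ n ∈ F, ∃ m ∈ G, m ∈ Phi e n}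

/-- Realisability conjunction via pairing. -/
def rAnd (F G : Set ℕ) : Set ℕ := {k | ∃ n ∈ F, ∃ m ∈ G, k = Nat.pair n m}

/-- Realisability bi-implication. -/
def rIff (F G : Set ℕ) : Set ℕ := rAnd (rImp F G) (rImp G F)

/-- Realisability universal quantification (intersection). -/
def rAll {X : Type} (H : X → Set ℕ) : Set ℕ := ⋂ x, H x

/-- Realisability existential quantification (union). -/
def rEx {X : Type} (H : X → Set ℕ) : Set ℕ := ⋃ x, H x

/-- Realisability symmetry of a relation. -/
def IsSymm' {X : Type} (eqX : X → X → Set ℕ) : Prop :=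
  (rAll fun x => rAll fun y => rImp (eqX x y) (eqX y x)).Nonempty

/-- Realisability transitivity of a relation. -/
def IsTrans' {X : Type} (eqX : X → X → Set ℕ) : Prop :=
  (rAll fun x => rAll fun y => rAll fun z =>
    rImp (eqX x y) (rImp (eqX y z) (eqX x z))).Nonempty

/-- `eqX` makes its carrier an effective set. -/
def IsEff {X : Type} (eqX : X → X → Set ℕ) : Prop := IsSymm' eqX ∧ IsTrans' eqX

/-- Equality of `El(X)` : stability ∧ unicity ∧ existence ∧ equivalence. -/
def elEq {X : Type} (eqX : X → X → Set ℕ) (u v : X → Set ℕ) : Set ℕ :=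
  rAnd (rAll fun x => rAll fun x' => rImp (u x) (rImp (eqX x x') (u x')))
    (rAnd (rAll fun x => rAll fun x' => rImp (u x) (rImp (u x') (eqX x x')))
      (rAnd (rEx fun x => u x)
        (rAll fun x => rIff (u x) (v x))))

/-- Injection from the low level to the high level. -/
def el {X : Type} (eqX : X → X → Set ℕ) (x : X) : X → Set ℕ := fun y => eqX x y

theorem phi_partrec : Partrec₂ Phi :=
  Nat.Partrec.Code.eval_part.comp
    ((Computable.ofNat Code).comp Computable.fst) Computable.snd

open Classical in
noncomputable def codeOf (F : ℕ →. ℕ) : ℕ :=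
  if h : Nat.Partrec F then Encodable.encode (Nat.Partrec.Code.exists_code.1 h).choose else 0

theorem codeOf_spec {F : ℕ →. ℕ} (hF : Partrec F) (n : ℕ) : Phi (codeOf F) n = F n := by
  have h : Nat.Partrec F := Partrec.nat_iff.1 hF
  simp only [codeOf, dif_pos h, Phi, Denumerable.ofNat_encode]
  exact congrFun (Nat.Partrec.Code.exists_code.1 h).choose_spec n

attribute [irreducible] codeOf

def curry2 (c a : ℕ) : ℕ :=
  Encodable.encode ((Denumerable.ofNat Code c).curry a)

theorem curry2_phi (c a b : ℕ) : Phi (curry2 c a) b = Phi c (Nat.pair a b) := by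
  simp [curry2, Phi, Denumerable.ofNat_encode, Nat.Partrec.Code.eval_curry]

theorem curry2_prim : Primrec₂ curry2 :=
  Primrec.encode.comp₂ (Nat.Partrec.Code.primrec₂_curry.comp₂
    ((Primrec.ofNat Code).comp₂ Primrec₂.left) Primrec₂.right)

def u1 (k : ℕ) : ℕ := k.unpair.1
def u2 (k : ℕ) : ℕ := k.unpair.2
def cS (q : ℕ) : ℕ := u1 q
def cU (q : ℕ) : ℕ := u1 (u2 q)
def cE (q : ℕ) : ℕ := u1 (u2 (u2 q))
def cI (q : ℕ) : ℕ := u1 (u2 (u2 (u2 q)))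
def cJ (q : ℕ) : ℕ := u2 (u2 (u2 (u2 q)))

theorem u1_prim : Primrec u1 := Primrec.fst.comp Primrec.unpair
theorem u2_prim : Primrec u2 := Primrec.snd.comp Primrec.unpair

theorem mem_rAnd_iff {k : ℕ} {F G : Set ℕ} :
    k ∈ rAnd F G ↔ u1 k ∈ F ∧ u2 k ∈ G := by
  constructor
  · rintro ⟨n, hn, m, hm, rfl⟩
    simpa [u1, u2] using ⟨hn, hm⟩
  · rintro ⟨h1, h2⟩
    exact ⟨u1 k, h1, u2 k, h2, (Nat.pair_unpair k).symm⟩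

theorem mem_rAll {X : Type} {H : X → Set ℕ} {e : ℕ} : e ∈ rAll H ↔ ∀ x, e ∈ H x :=
  Set.mem_iInter

theorem mem_rEx {X : Type} {H : X → Set ℕ} {e : ℕ} : e ∈ rEx H ↔ ∃ x, e ∈ H x :=
  Set.mem_iUnion

theorem mem_elEq_iff {X : Type} {eqX : X → X → Set ℕ} {u v : X → Set ℕ} {q : ℕ} :
    q ∈ elEq eqX u v ↔
      ((∀ x x', cS q ∈ rImp (u x) (rImp (eqX x x') (u x'))) ∧
       (∀ x x', cU q ∈ rImp (u x) (rImp (u x') (eqX x x'))) ∧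
       (∃ x, cE q ∈ u x) ∧
       (∀ x, cI q ∈ rImp (u x) (v x) ∧ cJ q ∈ rImp (v x) (u x))) := by
  simp only [elEq, mem_rAnd_iff, mem_rAll, mem_rEx, rIff, cS, cU, cE, cI, cJ]


@[simp] theorem u1_pair (a b : ℕ) : u1 (Nat.pair a b) = a := by simp [u1]
@[simp] theorem u2_pair (a b : ℕ) : u2 (Nat.pair a b) = b := by simp [u2]

theorem mem_elEq_intro {X : Type} {eqX : X → X → Set ℕ} {u v : X → Set ℕ}
    {S U E I J : ℕ}
    (hS : ∀ x x', S ∈ rImp (u x) (rImp (eqX x x') (u x')))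
    (hU : ∀ x x', U ∈ rImp (u x) (rImp (u x') (eqX x x')))
    (hE : ∃ x, E ∈ u x)
    (hI : ∀ x, I ∈ rImp (u x) (v x)) (hJ : ∀ x, J ∈ rImp (v x) (u x)) :
    Nat.pair S (Nat.pair U (Nat.pair E (Nat.pair I J))) ∈ elEq eqX u v := by
  rw [mem_elEq_iff]
  refine ⟨?_, ?_, ?_, ?_⟩ <;> simp only [cS, cU, cE, cI, cJ, u1_pair, u2_pair]
  exacts [hS, hU, hE, fun x => ⟨hI x, hJ x⟩]

def cPairF : ℕ →. ℕ := fun z => Part.some (curry2 (u1 (u1 z)) (Nat.pair (u2 (u1 z)) (u2 z)))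

theorem cPairF_partrec : Partrec cPairF := by
  have : Primrec fun z => curry2 (u1 (u1 z)) (Nat.pair (u2 (u1 z)) (u2 z)) :=
    curry2_prim.comp (u1_prim.comp u1_prim)
      (Primrec₂.natPair.comp (u2_prim.comp u1_prim) u2_prim)
  exact this.to_comp.partrec

noncomputable def curry3 (c a : ℕ) : ℕ := curry2 (codeOf cPairF) (Nat.pair c a)

theorem curry3_phi (c a b : ℕ) :
    Phi (curry3 c a) b = Part.some (curry2 c (Nat.pair a b)) := by
  rw [curry3, curry2_phi, codeOf_spec cPairF_partrec]
  simp [cPairF]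

theorem cS_prim : Primrec cS := u1_prim
theorem cU_prim : Primrec cU := u1_prim.comp u2_prim
theorem cE_prim : Primrec cE := u1_prim.comp (u2_prim.comp u2_prim)
theorem cI_prim : Primrec cI := u1_prim.comp (u2_prim.comp (u2_prim.comp u2_prim))
theorem cJ_prim : Primrec cJ := u2_prim.comp (u2_prim.comp (u2_prim.comp u2_prim))

def FInner : ℕ →. ℕ := fun z => (Phi (u2 (u1 z)) (u2 z)).map (Nat.pair (u1 (u1 z)))

theorem FInner_partrec : Partrec FInner := by
  unfold FInner
  exact (phi_partrec.comp (u2_prim.comp u1_prim).to_comp u2_prim.to_comp).map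
    ((Primrec₂.natPair.comp ((u1_prim.comp u1_prim).comp Primrec.fst)
      Primrec.snd).to_comp)

/-- Goal 2 stability component. -/
noncomputable def FS (sX tX cf : ℕ) : ℕ →. ℕ := fun k =>
  (Phi sX (u1 k)).bind fun p' =>
  (Phi tX p').bind fun t =>
  (Phi t (u1 k)).bind fun r =>
  (Phi cf r).bind fun pf =>
  (Phi (cS pf) (u2 k)).map fun s' =>
    curry2 (codeOf FInner) (Nat.pair (u1 k) s')

theorem FS_partrec (sX tX cf : ℕ) : Partrec (FS sX tX cf) := by
  unfold FS
  apply Partrec.bind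
  · exact phi_partrec.comp (Computable.const sX) u1_prim.to_comp
  apply Partrec.bind
  · exact phi_partrec.comp (Computable.const tX) Computable.snd
  apply Partrec.bind
  · exact phi_partrec.comp Computable.snd
      (u1_prim.to_comp.comp (Computable.fst.comp Computable.fst))
  apply Partrec.bind
  · exact phi_partrec.comp (Computable.const cf) Computable.snd
  apply Partrec.map
  · exact phi_partrec.comp (cS_prim.to_comp.comp Computable.snd)
      (u2_prim.to_comp.comp
        (Computable.fst.comp (Computable.fst.comp (Computable.fst.comp Computable.fst))))
  · exact (curry2_prim.comp (Primrec.const (codeOf FInner))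
      (Primrec₂.natPair.comp
        (u1_prim.comp (Primrec.fst.comp (Primrec.fst.comp (Primrec.fst.comp
          (Primrec.fst.comp Primrec.fst)))))
        Primrec.snd)).to_comp

/-- Goal 2 forward-implication component. -/
def FIg2 (cf : ℕ) : ℕ →. ℕ := fun k =>
  (Phi cf (u1 k)).bind fun pf => Phi (cJ pf) (u2 k)

theorem FIg2_partrec (cf : ℕ) : Partrec (FIg2 cf) := by
  unfold FIg2
  apply Partrec.bind
  · exact phi_partrec.comp (Computable.const cf) u1_prim.to_comp
  · exact phi_partrec.comp (cJ_prim.to_comp.comp Computable.snd)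
      (u2_prim.to_comp.comp Computable.fst)

/-- Goal 2 unicity component (inner). -/
def FU0g2 (cf : ℕ) : ℕ →. ℕ := fun z =>
  (Phi cf (u1 (u1 z))).bind fun pfn =>
  (Phi cf (u1 (u2 (u1 z)))).bind fun pfp =>
  (Phi (cJ pfp) (u2 (u2 (u1 z)))).bind fun m0 =>
  (Phi cf (u1 (u2 z))).bind fun pfp' =>
  (Phi (cJ pfp') (u2 (u2 z))).bind fun m0' =>
  (Phi (cU pfn) m0).bind fun t =>
  Phi t m0'

theorem FU0g2_partrec (cf : ℕ) : Partrec (FU0g2 cf) := by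
  unfold FU0g2
  apply Partrec.bind
  · exact phi_partrec.comp (Computable.const cf) (u1_prim.comp u1_prim).to_comp
  apply Partrec.bind
  · exact phi_partrec.comp (Computable.const cf)
      ((u1_prim.comp (u2_prim.comp u1_prim)).to_comp.comp Computable.fst)
  apply Partrec.bind
  · exact phi_partrec.comp (cJ_prim.to_comp.comp Computable.snd)
      ((u2_prim.comp (u2_prim.comp u1_prim)).to_comp.comp
        (Computable.fst.comp Computable.fst))
  apply Partrec.bind
  · exact phi_partrec.comp (Computable.const cf)
      ((u1_prim.comp u2_prim).to_comp.comp
        (Computable.fst.comp (Computable.fst.comp Computable.fst)))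
  apply Partrec.bind
  · exact phi_partrec.comp (cJ_prim.to_comp.comp Computable.snd)
      ((u2_prim.comp u2_prim).to_comp.comp
        (Computable.fst.comp (Computable.fst.comp (Computable.fst.comp Computable.fst))))
  apply Partrec.bind
  · exact phi_partrec.comp
      (cU_prim.to_comp.comp (Computable.snd.comp
        (Computable.fst.comp (Computable.fst.comp (Computable.fst.comp Computable.fst)))))
      (Computable.snd.comp (Computable.fst.comp Computable.fst))
  · exact phi_partrec.comp Computable.snd
      (Computable.snd.comp Computable.fst)

def idP : ℕ →. ℕ := fun z => Part.some z

theorem idP_partrec : Partrec idP := Computable.id.partrec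

/-- Goal 2 top-level realiser. -/
noncomputable def G2 (sX tX cf : ℕ) : ℕ →. ℕ := fun n =>
  (Phi cf n).map fun pfn =>
    Nat.pair (codeOf (FS sX tX cf))
      (Nat.pair (curry3 (codeOf (FU0g2 cf)) n)
        (Nat.pair (Nat.pair n (cE pfn))
          (Nat.pair (codeOf (FIg2 cf)) (curry2 (codeOf idP) n))))

theorem G2_partrec (sX tX cf : ℕ) : Partrec (G2 sX tX cf) := by
  unfold G2 curry3
  apply Partrec.map
  · exact phi_partrec.comp (Computable.const cf) Computable.id
  · exact (Primrec₂.natPair.comp (Primrec.const (codeOf (FS sX tX cf)))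
      (Primrec₂.natPair.comp
        (curry2_prim.comp (Primrec.const (codeOf cPairF))
          (Primrec₂.natPair.comp (Primrec.const (codeOf (FU0g2 cf))) Primrec.fst))
        (Primrec₂.natPair.comp
          (Primrec₂.natPair.comp Primrec.fst (cE_prim.comp Primrec.snd))
          (Primrec₂.natPair.comp (Primrec.const (codeOf (FIg2 cf)))
            (curry2_prim.comp (Primrec.const (codeOf idP)) Primrec.fst))))).to_comp

/-- Goal 1 stability component (inner). -/
noncomputable def FS1 (cf : ℕ) : ℕ →. ℕ := fun z =>
  (Phi (u1 z) (u1 (u2 z))).bind fun t =>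
  (Phi t (u1 (u2 z))).bind fun r =>
  (Phi cf r).bind fun pf =>
  (Phi (cS pf) (u2 (u2 z))).map fun s' =>
    curry2 (codeOf FInner) (Nat.pair (u1 (u2 z)) s')

theorem FS1_partrec (cf : ℕ) : Partrec (FS1 cf) := by
  unfold FS1
  apply Partrec.bind
  · exact phi_partrec.comp u1_prim.to_comp (u1_prim.comp u2_prim).to_comp
  apply Partrec.bind
  · exact phi_partrec.comp Computable.snd
      ((u1_prim.comp u2_prim).to_comp.comp Computable.fst)
  apply Partrec.bind
  · exact phi_partrec.comp (Computable.const cf) Computable.snd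
  apply Partrec.map
  · exact phi_partrec.comp (cS_prim.to_comp.comp Computable.snd)
      ((u2_prim.comp u2_prim).to_comp.comp
        (Computable.fst.comp (Computable.fst.comp Computable.fst)))
  · exact (curry2_prim.comp (Primrec.const (codeOf FInner))
      (Primrec₂.natPair.comp
        ((u1_prim.comp u2_prim).comp
          (Primrec.fst.comp (Primrec.fst.comp (Primrec.fst.comp Primrec.fst))))
        Primrec.snd)).to_comp

/-- Goal 1 unicity component (inner). -/
def FU0 (cf : ℕ) : ℕ →. ℕ := fun z =>
  (Phi (u1 (u1 z)) (u1 (u2 (u1 z)))).bind fun t =>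
  (Phi t (u1 (u2 z))).bind fun r =>
  (Phi cf r).bind fun pf =>
  (Phi (cJ pf) (u2 (u2 z))).bind fun m'' =>
  (Phi (cU pf) (u2 (u2 (u1 z)))).bind fun t2 =>
  Phi t2 m''

theorem FU0_partrec (cf : ℕ) : Partrec (FU0 cf) := by
  unfold FU0
  apply Partrec.bind
  · exact phi_partrec.comp (u1_prim.comp u1_prim).to_comp
      (u1_prim.comp (u2_prim.comp u1_prim)).to_comp
  apply Partrec.bind
  · exact phi_partrec.comp Computable.snd
      ((u1_prim.comp u2_prim).to_comp.comp Computable.fst)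
  apply Partrec.bind
  · exact phi_partrec.comp (Computable.const cf) Computable.snd
  apply Partrec.bind
  · exact phi_partrec.comp (cJ_prim.to_comp.comp Computable.snd)
      ((u2_prim.comp u2_prim).to_comp.comp
        (Computable.fst.comp (Computable.fst.comp Computable.fst)))
  apply Partrec.bind
  · exact phi_partrec.comp
      (cU_prim.to_comp.comp (Computable.snd.comp Computable.fst))
      ((u2_prim.comp (u2_prim.comp u1_prim)).to_comp.comp
        (Computable.fst.comp (Computable.fst.comp (Computable.fst.comp Computable.fst))))
  · exact phi_partrec.comp Computable.snd (Computable.snd.comp Computable.fst)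

/-- Goal 1 implication components (inner). -/
def FI1 : ℕ →. ℕ := fun z =>
  (Phi (u1 z) (u1 (u2 z))).map fun v => Nat.pair v (u2 (u2 z))

theorem FI1_partrec : Partrec FI1 := by
  unfold FI1
  apply Partrec.map
  · exact phi_partrec.comp u1_prim.to_comp (u1_prim.comp u2_prim).to_comp
  · exact (Primrec₂.natPair.comp Primrec.snd
      ((u2_prim.comp u2_prim).comp Primrec.fst)).to_comp

/-- Goal 1 top-level realiser. -/
noncomputable def G1 (cf : ℕ) : ℕ →. ℕ := fun P =>
  (Phi (cU P) (cE P)).bind fun t =>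
  (Phi t (cE P)).bind fun r =>
  (Phi cf r).map fun pf =>
    Nat.pair (curry2 (codeOf (FS1 cf)) (cU P))
      (Nat.pair (curry3 (codeOf (FU0 cf)) (cU P))
        (Nat.pair (Nat.pair (cE P) (cE pf))
          (Nat.pair (curry2 (codeOf FI1) (cI P)) (curry2 (codeOf FI1) (cJ P)))))

theorem G1_partrec (cf : ℕ) : Partrec (G1 cf) := by
  unfold G1 curry3
  apply Partrec.bind
  · exact phi_partrec.comp cU_prim.to_comp cE_prim.to_comp
  apply Partrec.bind
  · exact phi_partrec.comp Computable.snd (cE_prim.to_comp.comp Computable.fst)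
  apply Partrec.map
  · exact phi_partrec.comp (Computable.const cf) Computable.snd
  · refine ((Primrec₂.natPair.comp
      (curry2_prim.comp (Primrec.const (codeOf (FS1 cf)))
        (cU_prim.comp ?P))
      (Primrec₂.natPair.comp
        (curry2_prim.comp (Primrec.const (codeOf cPairF))
          (Primrec₂.natPair.comp (Primrec.const (codeOf (FU0 cf))) (cU_prim.comp ?P)))
        (Primrec₂.natPair.comp
          (Primrec₂.natPair.comp (cE_prim.comp ?P) (cE_prim.comp Primrec.snd))
          (Primrec₂.natPair.comp
            (curry2_prim.comp (Primrec.const (codeOf FI1)) (cI_prim.comp ?P))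
            (curry2_prim.comp (Primrec.const (codeOf FI1)) (cJ_prim.comp ?P)))))).to_comp)
    case P => exact Primrec.fst.comp (Primrec.fst.comp Primrec.fst)

theorem mem_rImp_iff {e : ℕ} {F G : Set ℕ} :
    e ∈ rImp F G ↔ ∀ n ∈ F, ∃ m ∈ G, m ∈ Phi e n := Iff.rfl

theorem mem_g_iff {X : Type} {u : X → Set ℕ} {fy : X → Set ℕ} {k : ℕ} :
    k ∈ rEx (fun x => rAnd (u x) (fy x)) ↔ ∃ x, u1 k ∈ u x ∧ u2 k ∈ fy x := by
  simp [mem_rEx, mem_rAnd_iff]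

set_option maxHeartbeats 1000000 in
theorem extension_of_function_exists {X Y : Type}
    (eqX : X → X → Set ℕ) (eqY : Y → Y → Set ℕ)
    (hX : IsEff eqX) (hY : IsEff eqY)
    (f : X → (Y → Set ℕ))
    (hf : (rAll fun x : X => rAll fun x' : X =>
      rImp (eqX x x') (elEq eqY (f x) (f x'))).Nonempty) :
    ((rAll fun u : X → Set ℕ => rAll fun u' : X → Set ℕ =>
        rImp (elEq eqX u u')
          (elEq eqY (fun y => rEx fun x : X => rAnd (u x) (f x y))
                    (fun y => rEx fun x : X => rAnd (u' x) (f x y)))).Nonempty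
      ∧
      (rAll fun x : X => rImp (eqX x x)
        (elEq eqY (fun y => rEx fun x' : X => rAnd (el eqX x x') (f x' y))
                  (f x))).Nonempty) := by
  obtain ⟨sX, hsX⟩ := hX.1
  obtain ⟨tX, htX⟩ := hX.2
  obtain ⟨cf, hcf⟩ := hf
  have hsX' : ∀ x y n, n ∈ eqX x y → ∃ m ∈ eqX y x, m ∈ Phi sX n := by
    intro x y
    exact mem_rAll.1 (mem_rAll.1 hsX x) y
  have htX' : ∀ x y z n, n ∈ eqX x y →
      ∃ t ∈ rImp (eqX y z) (eqX x z), t ∈ Phi tX n := by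
    intro x y z
    exact mem_rAll.1 (mem_rAll.1 (mem_rAll.1 htX x) y) z
  have hcf' : ∀ x x' n, n ∈ eqX x x' →
      ∃ q ∈ elEq eqY (f x) (f x'), q ∈ Phi cf n := by
    intro x x'
    exact mem_rAll.1 (mem_rAll.1 hcf x) x'
  constructor
  · -- Goal 1 : stability of g
    refine ⟨codeOf (G1 cf), mem_rAll.2 fun u => mem_rAll.2 fun u' => ?_⟩
    intro P hP
    obtain ⟨hPS, hPU, ⟨x₀, hE0⟩, hPIJ⟩ := mem_elEq_iff.1 hP
    obtain ⟨t0, ht0, ht0m⟩ := hPU x₀ x₀ (cE P) hE0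
    obtain ⟨r0, hr0, hr0m⟩ := ht0 (cE P) hE0
    obtain ⟨pf0, hpf0, hpf0m⟩ := hcf' x₀ x₀ r0 hr0
    refine ⟨Nat.pair (curry2 (codeOf (FS1 cf)) (cU P))
      (Nat.pair (curry3 (codeOf (FU0 cf)) (cU P))
        (Nat.pair (Nat.pair (cE P) (cE pf0))
          (Nat.pair (curry2 (codeOf FI1) (cI P)) (curry2 (codeOf FI1) (cJ P))))),
      ?_, ?_⟩
    · refine mem_elEq_intro ?_ ?_ ?_ ?_ ?_
      · -- stability of g u
        intro y y' k hk
        obtain ⟨x, hp, hm⟩ := mem_g_iff.1 hk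
        obtain ⟨t, ht, htm⟩ := hPU x x (u1 k) hp
        obtain ⟨r, hr, hrm⟩ := ht (u1 k) hp
        obtain ⟨pf, hpf, hpfm⟩ := hcf' x x r hr
        obtain ⟨s', hs', hs'm⟩ := (mem_elEq_iff.1 hpf).1 y y' (u2 k) hm
        refine ⟨curry2 (codeOf FInner) (Nat.pair (u1 k) s'), ?_, ?_⟩
        · intro q hq
          obtain ⟨v, hv, hvm⟩ := hs' q hq
          refine ⟨Nat.pair (u1 k) v, ?_, ?_⟩
          · exact mem_g_iff.2 ⟨x, by simpa using hp, by simpa using hv⟩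
          · rw [curry2_phi, codeOf_spec FInner_partrec]
            unfold FInner
            simp only [u1_pair, u2_pair]
            exact Part.mem_map _ hvm
        · rw [curry2_phi, codeOf_spec (FS1_partrec cf)]
          unfold FS1
          simp only [u1_pair, u2_pair]
          refine Part.mem_bind_iff.2 ⟨t, htm, ?_⟩
          refine Part.mem_bind_iff.2 ⟨r, hrm, ?_⟩
          refine Part.mem_bind_iff.2 ⟨pf, hpfm, ?_⟩
          exact Part.mem_map _ hs'm
      · -- unicity of g u
        intro y y' k hk
        obtain ⟨x, hp, hm⟩ := mem_g_iff.1 hk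
        refine ⟨curry2 (codeOf (FU0 cf)) (Nat.pair (cU P) k), ?_, ?_⟩
        · intro k' hk'
          obtain ⟨x', hp', hm'⟩ := mem_g_iff.1 hk'
          obtain ⟨t, ht, htm⟩ := hPU x x' (u1 k) hp
          obtain ⟨r, hr, hrm⟩ := ht (u1 k') hp'
          obtain ⟨pf, hpf, hpfm⟩ := hcf' x x' r hr
          obtain ⟨m2, hm2, hm2m⟩ := ((mem_elEq_iff.1 hpf).2.2.2 y').2 (u2 k') hm'
          obtain ⟨t2, ht2, ht2m⟩ := (mem_elEq_iff.1 hpf).2.1 y y' (u2 k) hm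
          obtain ⟨res, hres, hresm⟩ := ht2 m2 hm2
          refine ⟨res, hres, ?_⟩
          rw [curry2_phi, codeOf_spec (FU0_partrec cf)]
          unfold FU0
          simp only [u1_pair, u2_pair]
          refine Part.mem_bind_iff.2 ⟨t, htm, ?_⟩
          refine Part.mem_bind_iff.2 ⟨r, hrm, ?_⟩
          refine Part.mem_bind_iff.2 ⟨pf, hpfm, ?_⟩
          refine Part.mem_bind_iff.2 ⟨m2, hm2m, ?_⟩
          exact Part.mem_bind_iff.2 ⟨t2, ht2m, hresm⟩
        · rw [curry3_phi]
          exact Part.mem_some _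
      · -- existence for g u
        obtain ⟨y0, hy0⟩ := (mem_elEq_iff.1 hpf0).2.2.1
        exact ⟨y0, mem_g_iff.2 ⟨x₀, by simpa using hE0, by simpa using hy0⟩⟩
      · -- g u → g u'
        intro y k hk
        obtain ⟨x, hp, hm⟩ := mem_g_iff.1 hk
        obtain ⟨v, hv, hvm⟩ := (hPIJ x).1 (u1 k) hp
        refine ⟨Nat.pair v (u2 k), ?_, ?_⟩
        · exact mem_g_iff.2 ⟨x, by simpa using hv, by simpa using hm⟩
        · rw [curry2_phi, codeOf_spec FI1_partrec]
          unfold FI1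
          simp only [u1_pair, u2_pair]
          exact Part.mem_map _ hvm
      · -- g u' → g u
        intro y k hk
        obtain ⟨x, hp, hm⟩ := mem_g_iff.1 hk
        obtain ⟨v, hv, hvm⟩ := (hPIJ x).2 (u1 k) hp
        refine ⟨Nat.pair v (u2 k), ?_, ?_⟩
        · exact mem_g_iff.2 ⟨x, by simpa using hv, by simpa using hm⟩
        · rw [curry2_phi, codeOf_spec FI1_partrec]
          unfold FI1
          simp only [u1_pair, u2_pair]
          exact Part.mem_map _ hvm
    · rw [codeOf_spec (G1_partrec cf)]
      unfold G1
      refine Part.mem_bind_iff.2 ⟨t0, ht0m, ?_⟩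
      refine Part.mem_bind_iff.2 ⟨r0, hr0m, ?_⟩
      exact Part.mem_map _ hpf0m
  · -- Goal 2 : g ∘ el = f
    refine ⟨codeOf (G2 sX tX cf), mem_rAll.2 fun x => ?_⟩
    intro n hn
    obtain ⟨pfn, hpfn, hpfnm⟩ := hcf' x x n hn
    have hpfn' := mem_elEq_iff.1 hpfn
    refine ⟨Nat.pair (codeOf (FS sX tX cf))
      (Nat.pair (curry3 (codeOf (FU0g2 cf)) n)
        (Nat.pair (Nat.pair n (cE pfn))
          (Nat.pair (codeOf (FIg2 cf)) (curry2 (codeOf idP) n)))), ?_, ?_⟩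
    · refine mem_elEq_intro ?_ ?_ ?_ ?_ ?_
      · -- stability of g(el x)
        intro y y' k hk
        obtain ⟨x', hp, hm⟩ := mem_g_iff.1 hk
        obtain ⟨p', hp', hp'm⟩ := hsX' x x' (u1 k) hp
        obtain ⟨t, ht, htm⟩ := htX' x' x x' p' hp'
        obtain ⟨r, hr, hrm⟩ := ht (u1 k) hp
        obtain ⟨pf, hpf, hpfm⟩ := hcf' x' x' r hr
        obtain ⟨s', hs', hs'm⟩ := (mem_elEq_iff.1 hpf).1 y y' (u2 k) hm
        refine ⟨curry2 (codeOf FInner) (Nat.pair (u1 k) s'), ?_, ?_⟩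
        · intro q hq
          obtain ⟨v, hv, hvm⟩ := hs' q hq
          refine ⟨Nat.pair (u1 k) v, ?_, ?_⟩
          · exact mem_g_iff.2 ⟨x', by simpa using hp, by simpa using hv⟩
          · rw [curry2_phi, codeOf_spec FInner_partrec]
            unfold FInner
            simp only [u1_pair, u2_pair]
            exact Part.mem_map _ hvm
        · rw [codeOf_spec (FS_partrec sX tX cf)]
          unfold FS
          refine Part.mem_bind_iff.2 ⟨p', hp'm, ?_⟩
          refine Part.mem_bind_iff.2 ⟨t, htm, ?_⟩
          refine Part.mem_bind_iff.2 ⟨r, hrm, ?_⟩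
          refine Part.mem_bind_iff.2 ⟨pf, hpfm, ?_⟩
          exact Part.mem_map _ hs'm
      · -- unicity of g(el x)
        intro y y' k hk
        obtain ⟨x₁, hp, hm⟩ := mem_g_iff.1 hk
        refine ⟨curry2 (codeOf (FU0g2 cf)) (Nat.pair n k), ?_, ?_⟩
        · intro k' hk'
          obtain ⟨x₂, hp', hm'⟩ := mem_g_iff.1 hk'
          obtain ⟨pfp, hpfp, hpfpm⟩ := hcf' x x₁ (u1 k) hp
          obtain ⟨m0, hm0, hm0m⟩ := ((mem_elEq_iff.1 hpfp).2.2.2 y).2 (u2 k) hm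
          obtain ⟨pfp', hpfp', hpfp'm⟩ := hcf' x x₂ (u1 k') hp'
          obtain ⟨m0', hm0', hm0'm⟩ := ((mem_elEq_iff.1 hpfp').2.2.2 y').2 (u2 k') hm'
          obtain ⟨t2, ht2, ht2m⟩ := hpfn'.2.1 y y' m0 hm0
          obtain ⟨res, hres, hresm⟩ := ht2 m0' hm0'
          refine ⟨res, hres, ?_⟩
          rw [curry2_phi, codeOf_spec (FU0g2_partrec cf)]
          unfold FU0g2
          simp only [u1_pair, u2_pair]
          refine Part.mem_bind_iff.2 ⟨pfn, hpfnm, ?_⟩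
          refine Part.mem_bind_iff.2 ⟨pfp, hpfpm, ?_⟩
          refine Part.mem_bind_iff.2 ⟨m0, hm0m, ?_⟩
          refine Part.mem_bind_iff.2 ⟨pfp', hpfp'm, ?_⟩
          refine Part.mem_bind_iff.2 ⟨m0', hm0'm, ?_⟩
          exact Part.mem_bind_iff.2 ⟨t2, ht2m, hresm⟩
        · rw [curry3_phi]
          exact Part.mem_some _
      · -- existence for g(el x)
        obtain ⟨y0, hy0⟩ := hpfn'.2.2.1
        exact ⟨y0, mem_g_iff.2 ⟨x, by simpa [el] using hn, by simpa using hy0⟩⟩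
      · -- g(el x) → f x
        intro y k hk
        obtain ⟨x₁, hp, hm⟩ := mem_g_iff.1 hk
        obtain ⟨pfp, hpfp, hpfpm⟩ := hcf' x x₁ (u1 k) hp
        obtain ⟨v, hv, hvm⟩ := ((mem_elEq_iff.1 hpfp).2.2.2 y).2 (u2 k) hm
        refine ⟨v, hv, ?_⟩
        rw [codeOf_spec (FIg2_partrec cf)]
        unfold FIg2
        exact Part.mem_bind_iff.2 ⟨pfp, hpfpm, hvm⟩
      · -- f x → g(el x)
        intro y m hm
        refine ⟨Nat.pair n m, ?_, ?_⟩
        · exact mem_g_iff.2 ⟨x, by simpa [el] using hn, by simpa using hm⟩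
        · rw [curry2_phi, codeOf_spec idP_partrec]
          exact Part.mem_some _
    · rw [codeOf_spec (G2_partrec sX tX cf)]
      unfold G2
      exact Part.mem_map _ hpfnm
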